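/- For every λ ∈ ℂ with λ ≠ 0, the determinant of the 3×3 complex matrix M(0,λ) with rows (c(iλ)−1, s(iλ)/(iλ), d(iλ)/(iλ)²), (iλ·d(iλ), c(iλ)−1, s(iλ)/(iλ)), ((iλ)²·s(iλ), iλ·d(iλ), c(iλ)−1) equals 3·(c(iλ) − c(−iλ)). -/

import Mathlib

/-!
The matrix is the circulant `circ(c - 1, s, d)` conjugated by `diag(1, iλ, (iλ)²)`, so its
determinant is `x³ + y³ + w³ - 3xyw` with `x = c - 1`, `y = s`, `w = d`, which factors over the
cube roots of unity as `∏ₖ (x + ωᵏ y + ω²ᵏ w)`. Since `c`, `s`, `d` are the discrete Fourier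
components of `z ↦ exp (ωᵏ z)`, the factors are `exp (ωᵏ iλ) - 1`. The three exponentials
multiply to `1`, so expanding the product leaves `∑ₖ exp (ωᵏ iλ) - ∑ₖ exp (-ωᵏ iλ)`, which is
`3 (c(iλ) - c(-iλ))`.
-/

open Complex

/-- ω = exp(2πi/3), a primitive cube root of unity. -/
noncomputable def ω : ℂ := Complex.exp (2 * Real.pi * Complex.I / 3)

/-- c(z) = (1/3)·∑_{k=1}^{3} exp(ω^k z). -/
noncomputable def cf (z : ℂ) : ℂ :=
  (1/3) * (Complex.exp (ω ^ 1 * z) + Complex.exp (ω ^ 2 * z) + Complex.exp (ω ^ 3 * z))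

/-- s(z) = (1/3)·∑_{k=1}^{3} ω^{-k} exp(ω^k z). -/
noncomputable def sf (z : ℂ) : ℂ :=
  (1/3) * ((ω ^ 1)⁻¹ * Complex.exp (ω ^ 1 * z) + (ω ^ 2)⁻¹ * Complex.exp (ω ^ 2 * z) +
    (ω ^ 3)⁻¹ * Complex.exp (ω ^ 3 * z))

/-- d(z) = (1/3)·∑_{k=1}^{3} ω^k exp(ω^k z). -/
noncomputable def df (z : ℂ) : ℂ :=
  (1/3) * (ω ^ 1 * Complex.exp (ω ^ 1 * z) + ω ^ 2 * Complex.exp (ω ^ 2 * z) +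
    ω ^ 3 * Complex.exp (ω ^ 3 * z))

/-- The boundary-condition matrix M(0,λ) of the periodic problem for i·y‴ = λ³·y. -/
noncomputable def M₀ (lam : ℂ) : Matrix (Fin 3) (Fin 3) ℂ :=
  !![cf (Complex.I * lam) - 1, sf (Complex.I * lam) / (Complex.I * lam),
       df (Complex.I * lam) / (Complex.I * lam) ^ 2;
     Complex.I * lam * df (Complex.I * lam), cf (Complex.I * lam) - 1,
       sf (Complex.I * lam) / (Complex.I * lam);
     (Complex.I * lam) ^ 2 * sf (Complex.I * lam), Complex.I * lam * df (Complex.I * lam),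
       cf (Complex.I * lam) - 1]

theorem isPrimitiveRoot_ω : IsPrimitiveRoot ω 3 := by
  simpa [ω] using Complex.isPrimitiveRoot_exp 3 three_ne_zero

theorem ω_pow_three : ω ^ 3 = 1 :=
  isPrimitiveRoot_ω.pow_eq_one

theorem ω_sq_add_ω_add_one : ω ^ 2 + ω + 1 = 0 := by
  have h := isPrimitiveRoot_ω.geom_sum_eq_zero (by norm_num)
  simp only [Finset.sum_range_succ, Finset.sum_range_zero, pow_zero, pow_one, zero_add] at h
  linear_combination h

theorem inv_ω : ω⁻¹ = ω ^ 2 :=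
  inv_eq_of_mul_eq_one_right (by linear_combination ω_pow_three)

theorem inv_ω_sq : (ω ^ 2)⁻¹ = ω :=
  inv_eq_of_mul_eq_one_right (by linear_combination ω_pow_three)

theorem det_conj_circulant {K : Type*} [Field K] (x y w z : K) (hz : z ≠ 0) :
    !![x, y / z, w / z ^ 2; z * w, x, y / z; z ^ 2 * y, z * w, x].det
      = x ^ 3 + y ^ 3 + w ^ 3 - 3 * x * y * w := by
  rw [Matrix.det_fin_three]
  simp only [Matrix.of_apply, Matrix.cons_val', Matrix.cons_val_zero, Matrix.cons_val_one,
    Matrix.cons_val_two, Matrix.head_cons, Matrix.tail_cons, Matrix.empty_val',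
    Matrix.cons_val_fin_one, Matrix.head_fin_const]
  field_simp
  ring

theorem add_pow_three_sub_mul_eq_mul {R : Type*} [CommRing R] {w : R} (hw : w ^ 2 + w + 1 = 0)
    (x y z : R) :
    x ^ 3 + y ^ 3 + z ^ 3 - 3 * x * y * z
      = (x + y + z) * (x + w * y + w ^ 2 * z) * (x + w ^ 2 * y + w * z) := by
  linear_combination -(x + y + z) * (x * y + x * z + (w - 1) * (y ^ 2 + z ^ 2)
    + (w ^ 2 - w + 1) * y * z) * hw

theorem sub_one_mul_sub_one_mul_sub_one_of_mul_eq_one {K : Type*} [Field K] {a b c : K}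
    (h : a * b * c = 1) :
    (a - 1) * (b - 1) * (c - 1) = a + b + c - (a⁻¹ + b⁻¹ + c⁻¹) := by
  rw [inv_eq_of_mul_eq_one_right (b := b * c) (by linear_combination h),
    inv_eq_of_mul_eq_one_right (b := a * c) (by linear_combination h),
    inv_eq_of_mul_eq_one_right (b := a * b) (by linear_combination h)]
  linear_combination h

theorem cf_eq (z : ℂ) : cf z = (exp (ω * z) + exp (ω ^ 2 * z) + exp z) / 3 := by
  rw [cf, ω_pow_three]; ring_nf

theorem cf_add_sf_add_df (z : ℂ) : cf z + sf z + df z = exp z := by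
  simp only [cf, sf, df, pow_one, inv_ω, inv_ω_sq, ω_pow_three, inv_one, one_mul]
  linear_combination (exp (ω * z) + exp (ω ^ 2 * z)) / 3 * ω_sq_add_ω_add_one

theorem cf_add_ω_mul_sf_add_df (z : ℂ) : cf z + ω * sf z + ω ^ 2 * df z = exp (ω * z) := by
  simp only [cf, sf, df, pow_one, inv_ω, inv_ω_sq, ω_pow_three, inv_one, one_mul]
  linear_combination (exp (ω ^ 2 * z) + exp z) / 3 * ω_sq_add_ω_add_one
    + (2 / 3 * exp (ω * z) + ω / 3 * exp (ω ^ 2 * z)) * ω_pow_three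

theorem cf_add_ω_sq_mul_sf_add_df (z : ℂ) :
    cf z + ω ^ 2 * sf z + ω * df z = exp (ω ^ 2 * z) := by
  simp only [cf, sf, df, pow_one, inv_ω, inv_ω_sq, ω_pow_three, inv_one, one_mul]
  linear_combination (exp (ω * z) + exp z) / 3 * ω_sq_add_ω_add_one
    + (ω / 3 * exp (ω * z) + 2 / 3 * exp (ω ^ 2 * z)) * ω_pow_three

theorem exp_ω_mul_mul_exp_ω_sq_mul_mul_exp (z : ℂ) :
    exp (ω * z) * exp (ω ^ 2 * z) * exp z = 1 := by
  rw [← exp_add, ← exp_add, ← exp_zero]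
  congr 1
  linear_combination z * ω_sq_add_ω_add_one

/-- det M(0,λ) = 3·(c(iλ) − c(−iλ)) for λ ≠ 0. -/
theorem stmt_13 (lam : ℂ) (hlam : lam ≠ 0) :
    (M₀ lam).det = 3 * (cf (Complex.I * lam) - cf (-(Complex.I * lam))) := by
  set z := Complex.I * lam
  calc (M₀ lam).det = (cf z - 1) ^ 3 + sf z ^ 3 + df z ^ 3 - 3 * (cf z - 1) * sf z * df z :=
        det_conj_circulant _ _ _ z (mul_ne_zero I_ne_zero hlam)
    _ = (cf z - 1 + ω * sf z + ω ^ 2 * df z) * (cf z - 1 + ω ^ 2 * sf z + ω * df z)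
          * (cf z - 1 + sf z + df z) := by
        rw [add_pow_three_sub_mul_eq_mul ω_sq_add_ω_add_one]; ring
    _ = (exp (ω * z) - 1) * (exp (ω ^ 2 * z) - 1) * (exp z - 1) := by
        rw [← cf_add_sf_add_df z, ← cf_add_ω_mul_sf_add_df z, ← cf_add_ω_sq_mul_sf_add_df z]; ring
    _ = 3 * (cf z - cf (-z)) := by
        rw [sub_one_mul_sub_one_mul_sub_one_of_mul_eq_one (exp_ω_mul_mul_exp_ω_sq_mul_mul_exp z),
          cf_eq, cf_eq, mul_neg, mul_neg, exp_neg, exp_neg, exp_neg]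
        ring
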